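/- For every prime ideal Q of B not containing J, the localization of A⋈^f J at the prime ideal Q̄^f := {(a, f(a)+j) : a ∈ A, j ∈ J, f(a)+j ∈ Q} is canonically isomorphic, as a ring, to the localization B_Q of B at Q; the isomorphism is induced by the projection p_B : A⋈^f J → B. -/

import Mathlib

section Amalgamation

variable {A B : Type*} [CommRing A] [CommRing B]

/-- The amalgamation `A ⋈^f J` of `A` with `B` along the ideal `J` of `B` with respect to
the ring homomorphism `f : A → B`, realized as the subring
`{(a, f a + j) | a ∈ A, j ∈ J}` of `A × B`. -/
def amalg (f : A →+* B) (J : Ideal B) : Subring (A × B) where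
  carrier := {x : A × B | x.2 - f x.1 ∈ J}
  zero_mem' := by simp
  one_mem' := by simp
  add_mem' := by
    intro x y hx hy
    simp only [Set.mem_setOf_eq, Prod.fst_add, Prod.snd_add, map_add] at *
    have h : x.2 + y.2 - (f x.1 + f y.1) = x.2 - f x.1 + (y.2 - f y.1) := by ring
    rw [h]; exact J.add_mem hx hy
  neg_mem' := by
    intro x hx
    simp only [Set.mem_setOf_eq, Prod.fst_neg, Prod.snd_neg, map_neg] at *
    have h : -x.2 - -f x.1 = -(x.2 - f x.1) := by ring
    rw [h]; exact J.neg_mem hx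
  mul_mem' := by
    intro x y hx hy
    simp only [Set.mem_setOf_eq, Prod.fst_mul, Prod.snd_mul, map_mul] at *
    have h : x.2 * y.2 - f x.1 * f y.1 = x.2 * (y.2 - f y.1) + (x.2 - f x.1) * f y.1 := by ring
    rw [h]
    exact J.add_mem (J.mul_mem_left _ hy) (J.mul_mem_right _ hx)

lemma mem_amalg_iff (f : A →+* B) (J : Ideal B) (x : A × B) :
    x ∈ amalg f J ↔ x.2 - f x.1 ∈ J := Iff.rfl

/-- The natural projection `p_A : A ⋈^f J → A`. -/
def pA (f : A →+* B) (J : Ideal B) : amalg f J →+* A :=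
  (RingHom.fst A B).comp (amalg f J).subtype

/-- The natural projection `p_B : A ⋈^f J → B`. -/
def pB (f : A →+* B) (J : Ideal B) : amalg f J →+* B :=
  (RingHom.snd A B).comp (amalg f J).subtype

/-- For an ideal `Q` of `B`, the ideal `Q̄^f = {(a, f a + j) | a ∈ A, j ∈ J, f a + j ∈ Q}`
of `A ⋈^f J`. -/
def idealQf (f : A →+* B) (J : Ideal B) (Q : Ideal B) : Ideal (amalg f J) :=
  Submodule.copy (Ideal.comap (pB f J) Q)
    {x : amalg f J | ∃ a : A, ∃ j ∈ J, (x : A × B) = (a, f a + j) ∧ f a + j ∈ Q}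
    (by
      ext x
      simp only [Set.mem_setOf_eq, SetLike.mem_coe, Ideal.mem_comap]
      constructor
      · rintro ⟨a, j, hj, hx, hQ⟩
        have h1 : pB f J x = f a + j := by
          show (x : A × B).2 = f a + j
          rw [hx]
        rw [h1]; exact hQ
      · intro hx
        refine ⟨(x : A × B).1, (x : A × B).2 - f (x : A × B).1,
          (mem_amalg_iff f J _).mp x.2, by ext <;> simp, ?_⟩
        simpa using (show (x : A × B).2 ∈ Q from hx))

end Amalgamation

/-
The projection `p_B` maps the ideal `0 × J` of `A ⋈^f J` isomorphically onto `J`.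
Pick `j₀ ∈ J \ Q` and put `t = (0, j₀)`: then `p_B(t) · B ⊆ p_B(A ⋈^f J)` and `t` kills the
kernel of `p_B`. As `p_B(t) ∉ Q`, every fraction of `B_Q` comes from `A ⋈^f J`, and elements with
equal images in `B_Q` agree after multiplying by an element outside `Q̄^f = p_B⁻¹(Q)`; so `B_Q`
is the localization of `A ⋈^f J` at `Q̄^f`.
-/

section LocalizationComap

variable {R S : Type*} [CommRing R] [CommRing S] [Algebra R S]

theorem IsLocalization.comap_primeCompl_of_mul_mem_range (Q : Ideal S) [Q.IsPrime] (t : R)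
    (ht : algebraMap R S t ∉ Q)
    (hrange : ∀ s : S, ∃ r : R, algebraMap R S r = algebraMap R S t * s)
    (hker : ∀ x : R, algebraMap R S x = 0 → t * x = 0) :
    IsLocalization (Q.primeCompl.comap (algebraMap R S)) (Localization.AtPrime Q) := by
  have hts : ∀ s ∈ Q.primeCompl, algebraMap R S t * s ∈ Q.primeCompl :=
    fun s hs => Q.primeCompl.mul_mem ht hs
  refine ⟨fun m => ?_, fun z => ?_, fun {x y} hxy => ?_⟩
  · rw [IsScalarTower.algebraMap_apply R S]
    exact IsLocalization.map_units _ (⟨_, m.2⟩ : Q.primeCompl)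
  · obtain ⟨⟨b, s⟩, hz⟩ := IsLocalization.surj Q.primeCompl z
    obtain ⟨rb, hrb⟩ := hrange b
    obtain ⟨rs, hrs⟩ := hrange s
    have hrs_mem : rs ∈ Q.primeCompl.comap (algebraMap R S) := by
      simpa [Submonoid.mem_comap, hrs] using hts s s.2
    refine ⟨(rb, ⟨rs, hrs_mem⟩), ?_⟩
    simp only [IsScalarTower.algebraMap_apply R S (Localization.AtPrime Q), hrs, hrb, map_mul]
    rw [← hz]
    ring
  · simp only [IsScalarTower.algebraMap_apply R S (Localization.AtPrime Q)] at hxy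
    obtain ⟨c, hc⟩ := (IsLocalization.eq_iff_exists Q.primeCompl _).mp hxy
    obtain ⟨rc, hrc⟩ := hrange c
    have hrc_mem : t * rc ∈ Q.primeCompl.comap (algebraMap R S) := by
      simpa [Submonoid.mem_comap, hrc, mul_assoc] using hts _ (hts c c.2)
    refine ⟨⟨t * rc, hrc_mem⟩, ?_⟩
    have hzero : t * (rc * (x - y)) = 0 := by
      refine hker _ ?_
      rw [map_mul, map_sub, hrc, mul_sub, mul_assoc, mul_assoc, hc, sub_self]
    linear_combination hzero

end LocalizationComap

section Amalgamation

variable {A B : Type*} [CommRing A] [CommRing B] (f : A →+* B) (J : Ideal B)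

theorem primeCompl_idealQf (Q : Ideal B) [Q.IsPrime] [(idealQf f J Q).IsPrime] :
    (idealQf f J Q).primeCompl = Q.primeCompl.comap (pB f J) := by
  ext x
  exact not_congr (by rw [idealQf, Submodule.copy_eq]; rfl)

theorem zero_prod_mem_amalg {j : B} (hj : j ∈ J) : ((0 : A), j) ∈ amalg f J := by
  simpa [mem_amalg_iff] using hj

theorem exists_pB_eq_mul {j : B} (hj : j ∈ J) (b : B) :
    ∃ x : amalg f J, pB f J x = pB f J ⟨(0, j), zero_prod_mem_amalg f J hj⟩ * b :=
  ⟨⟨(0, j * b), zero_prod_mem_amalg f J (J.mul_mem_right b hj)⟩, rfl⟩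

theorem mul_eq_zero_of_pB_eq_zero {j : B} (hj : j ∈ J) {x : amalg f J} (hx : pB f J x = 0) :
    ⟨(0, j), zero_prod_mem_amalg f J hj⟩ * x = 0 := by
  ext
  · exact zero_mul _
  · exact (congrArg (j * ·) hx).trans (mul_zero j)

end Amalgamation

/-- For a prime `Q` of `B` not containing `J`, the localization of `A ⋈^f J` at `Q̄^f`
is canonically isomorphic to `B_Q`, via the map induced by `p_B`. -/
theorem stmt10 {A B : Type*} [CommRing A] [CommRing B] (f : A →+* B) (J : Ideal B)
    (Q : Ideal B) [Q.IsPrime] (hJQ : ¬ J ≤ Q) [(idealQf f J Q).IsPrime] :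
    ∃ e : Localization.AtPrime (idealQf f J Q) ≃+* Localization.AtPrime Q,
      ∀ x : amalg f J,
        e (algebraMap (amalg f J) (Localization.AtPrime (idealQf f J Q)) x) =
          algebraMap B (Localization.AtPrime Q) (pB f J x) := by
  obtain ⟨j₀, hj₀J, hj₀Q⟩ := SetLike.not_le_iff_exists.mp hJQ
  let _ := (pB f J).toAlgebra
  have : IsLocalization (idealQf f J Q).primeCompl (Localization.AtPrime Q) := by
    rw [primeCompl_idealQf]
    exact IsLocalization.comap_primeCompl_of_mul_mem_range Q
      ⟨(0, j₀), zero_prod_mem_amalg f J hj₀J⟩ hj₀Q (exists_pB_eq_mul f J hj₀J) (fun _ => mul_eq_zero_of_pB_eq_zero f J hj₀J)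
  exact ⟨(IsLocalization.algEquiv (idealQf f J Q).primeCompl _ _).toRingEquiv,
    (IsLocalization.algEquiv (idealQf f J Q).primeCompl _ _).commutes⟩
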